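/- Let (B, c_B) be a smooth compact complex irreducible real algebraic curve and L ∈ Pic(B). There exists a real structure on L lifting c_B (an antiholomorphic involution c_L of the total space of L, complex-antilinear on fibers, with p ∘ c_L = c_B ∘ p for the bundle projection p) if and only if c_B*(L) = L and, for every couple (D, f_D) consisting of a divisor D associated to L and a meromorphic function f_D with div(f_D) = c_B(D) − D and f_D · conj(f_D ∘ c_B) = ±1, one has f_D · conj(f_D ∘ c_B) = +1. -/

import Mathlib

noncomputable section

open Function Set

/-- A smooth compact complex irreducible algebraic curve `B`, equipped with a real
structure `cB` (an antiholomorphic involution of `B`), presented through its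
topological space of points, its field of meromorphic functions `Mero`, the
divisor-of-zeros-and-poles map `div`, the antiholomorphic pull-back
`σ : f ↦ conj (f ∘ cB)` on meromorphic functions, and the evaluation of meromorphic
functions at points of `B` (with value `∞` at poles).  The complex-analytic
structure itself is implicit in this data. -/
structure RealCurve where
  /-- the points of the curve -/
  B : Type
  [topB : TopologicalSpace B]
  [compactB : CompactSpace B]
  [connectedB : ConnectedSpace B]
  [t2B : T2Space B]
  /-- the real structure: a continuous (antiholomorphic) involution of `B` -/
  cB : B → B
  cB_cont : Continuous cB
  cB_invol : Function.Involutive cB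
  /-- the field of meromorphic functions on `B` -/
  Mero : Type
  [fieldMero : Field Mero]
  [algebraMero : Algebra ℂ Mero]
  /-- the divisor of zeros and poles of a meromorphic function
  (with the convention `div 0 = 0`) -/
  div : Mero → (B →₀ ℤ)
  div_mul : ∀ f g : Mero, f ≠ 0 → g ≠ 0 → div (f * g) = div f + div g
  div_algebraMap : ∀ z : ℂ, z ≠ 0 → div (algebraMap ℂ Mero z) = 0
  div_degree : ∀ f : Mero, f ≠ 0 → (div f).sum (fun _ n => n) = 0
  div_eq_zero_iff : ∀ f : Mero, f ≠ 0 → (div f = 0 ↔ ∃ z : ℂ, f = algebraMap ℂ Mero z)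
  /-- the antiholomorphic pull-back `σ f = conj (f ∘ cB)`, a ring automorphism of the
  field of meromorphic functions -/
  sigma : Mero ≃+* Mero
  sigma_invol : ∀ f, sigma (sigma f) = f
  sigma_algebraMap : ∀ z : ℂ,
      sigma (algebraMap ℂ Mero z) = algebraMap ℂ Mero (starRingEnd ℂ z)
  div_sigma : ∀ f : Mero, div (sigma f) = (div f).mapDomain cB
  /-- the value of a meromorphic function at a point of `B`, equal to `∞` at poles -/
  eval : Mero → B → OnePoint ℂ
  eval_algebraMap : ∀ (z : ℂ) (x : B), eval (algebraMap ℂ Mero z) x = (z : OnePoint ℂ)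
  eval_sigma : ∀ (f : Mero) (x : B),
      eval (sigma f) x = OnePoint.map (starRingEnd ℂ) (eval f (cB x))
  eval_infty_iff : ∀ (f : Mero) (x : B), f ≠ 0 →
      (eval f x = OnePoint.infty ↔ div f x < 0)
  eval_zero_iff : ∀ (f : Mero) (x : B), f ≠ 0 →
      (eval f x = ((0 : ℂ) : OnePoint ℂ) ↔ 0 < div f x)

namespace RealCurve

attribute [instance] topB compactB connectedB t2B fieldMero algebraMero

variable (C : RealCurve)

/-- The push-forward `c_B(D)` of a divisor `D` under the real structure. -/
def conjDiv (D : C.B →₀ ℤ) : C.B →₀ ℤ := D.mapDomain C.cB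

/-- A divisor is principal if it is the divisor of a nonzero meromorphic function. -/
def IsPrincipal (D : C.B →₀ ℤ) : Prop := ∃ f : C.Mero, f ≠ 0 ∧ C.div f = D

/-- Linear equivalence of divisors.  A line bundle `L ∈ Pic(B)` is identified with
the linear equivalence class of its associated divisors; e.g. `c_B^*(L) = L` means
`LinEquiv (conjDiv D) D` for the divisors `D` associated to `L`, and
`c_B^*(L) = L^*` means `LinEquiv (conjDiv D) (-D)`. -/
def LinEquiv (D D' : C.B →₀ ℤ) : Prop := C.IsPrincipal (D - D')

/-- The real part `ℝB` of the curve: the fixed point set of `c_B`. -/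
def RB : Type := {x : C.B // C.cB x = x}

instance : TopologicalSpace C.RB := by unfold RB; infer_instance

/-- The meromorphic function `f` takes a non-negative real value (possibly `∞`)
at the point `x`. -/
def NonnegAt (f : C.Mero) (x : C.B) : Prop :=
  C.eval f x = OnePoint.infty ∨ ∃ r : ℝ, 0 ≤ r ∧ C.eval f x = ((r : ℂ) : OnePoint ℂ)

/-- The meromorphic function `f` takes a non-positive real value (possibly `∞`)
at the point `x`. -/
def NonposAt (f : C.Mero) (x : C.B) : Prop :=
  C.eval f x = OnePoint.infty ∨ ∃ r : ℝ, r ≤ 0 ∧ C.eval f x = ((r : ℂ) : OnePoint ℂ)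

end RealCurve

/-- A holomorphic line bundle `L` on the curve `C`, presented through its
one-dimensional space `S` of meromorphic sections over the field of meromorphic
functions, together with the divisor map on meromorphic sections. -/
structure LineBundle (C : RealCurve) where
  /-- the meromorphic sections of `L` -/
  S : Type
  [acg : AddCommGroup S]
  [mod : Module C.Mero S]
  exists_section : ∃ s : S, s ≠ 0
  rank_one : ∀ s t : S, s ≠ 0 → ∃ f : C.Mero, t = f • s
  /-- the divisor of a meromorphic section (with the convention `divS 0 = 0`) -/
  divS : S → (C.B →₀ ℤ)
  divS_smul : ∀ (f : C.Mero) (s : S), f ≠ 0 → s ≠ 0 →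
      divS (f • s) = C.div f + divS s

namespace LineBundle

attribute [instance] acg mod

variable {C : RealCurve} (L : LineBundle C)

/-- `D` is a divisor associated to `L`, i.e. `L = L(D)` (`D` is the divisor of a
nonzero meromorphic section of `L`). -/
def Assoc (D : C.B →₀ ℤ) : Prop := ∃ s : L.S, s ≠ 0 ∧ L.divS s = D

end LineBundle

/-- A real structure on the line bundle `L` lifting `c_B` --- an antiholomorphic,
fiberwise antilinear involution `c_L` of the total space of `L` with
`p ∘ c_L = c_B ∘ p` --- presented through its induced action `s ↦ c_L ∘ s ∘ c_B` on
meromorphic sections: an additive, `σ`-semilinear, involutive map compatible with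
divisors. -/
structure LineBundle.RealStructure {C : RealCurve} (L : LineBundle C) where
  toFun : L.S → L.S
  map_add : ∀ s t : L.S, toFun (s + t) = toFun s + toFun t
  map_smul : ∀ (f : C.Mero) (s : L.S), toFun (f • s) = C.sigma f • toFun s
  invol : ∀ s : L.S, toFun (toFun s) = s
  div_comp : ∀ s : L.S, s ≠ 0 → L.divS (toFun s) = (L.divS s).mapDomain C.cB

/-!
A real structure `c` on `L` sends a nonzero section `s` to `g • s` with
`div g = c_B(div s) - div s`, and `c ∘ c = id` forces `g ⬝ σ g = 1`; any other `f` with this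
divisor is `z ⬝ g` for a constant `z`, so `f ⬝ σ f = |z|² ≠ -1`. Conversely, if
`div g₀ = c_B(D) - D` then `g₀ ⬝ σ g₀` has trivial divisor and is `σ`-invariant, hence is a nonzero
real constant `r`; rescaling `g₀` by `1 / √|r|` gives `g` with `g ⬝ σ g = ±1`, which is `+1` by
hypothesis, and then `f • s₀ ↦ (σ f ⬝ g) • s₀` is a real structure.
-/

namespace RealCurve

variable (C : RealCurve)

theorem div_one : C.div 1 = 0 := by
  simpa using C.div_algebraMap 1 one_ne_zero

variable {C}

theorem div_inv {g : C.Mero} (hg : g ≠ 0) : C.div g⁻¹ = -C.div g := by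
  have h := C.div_mul g g⁻¹ hg (inv_ne_zero hg)
  rw [mul_inv_cancel₀ hg, div_one] at h
  exact eq_neg_of_add_eq_zero_right h.symm

theorem conjDiv_conjDiv (D : C.B →₀ ℤ) : C.conjDiv (C.conjDiv D) = D := by
  rw [conjDiv, conjDiv, ← Finsupp.mapDomain_comp, C.cB_invol.comp_self, Finsupp.mapDomain_id]

theorem conjDiv_add (D D' : C.B →₀ ℤ) : C.conjDiv (D + D') = C.conjDiv D + C.conjDiv D' :=
  Finsupp.mapDomain_add

theorem conjDiv_sub (D D' : C.B →₀ ℤ) : C.conjDiv (D - D') = C.conjDiv D - C.conjDiv D' :=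
  map_sub (Finsupp.mapDomain.addMonoidHom C.cB) D D'

theorem exists_eq_algebraMap_mul_of_div_eq {f g : C.Mero} (hf : f ≠ 0) (hg : g ≠ 0)
    (h : C.div f = C.div g) : ∃ z : ℂ, f = algebraMap ℂ C.Mero z * g := by
  have hfg : f * g⁻¹ ≠ 0 := mul_ne_zero hf (inv_ne_zero hg)
  have hdiv : C.div (f * g⁻¹) = 0 := by
    rw [C.div_mul f g⁻¹ hf (inv_ne_zero hg), h, div_inv hg, add_neg_cancel]
  obtain ⟨z, hz⟩ := (C.div_eq_zero_iff _ hfg).mp hdiv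
  exact ⟨z, by rw [← hz, inv_mul_cancel_right₀ hg]⟩

theorem algebraMap_mul_mul_sigma (z : ℂ) (g : C.Mero) :
    algebraMap ℂ C.Mero z * g * C.sigma (algebraMap ℂ C.Mero z * g) =
      algebraMap ℂ C.Mero (Complex.normSq z) * (g * C.sigma g) := by
  rw [map_mul, C.sigma_algebraMap, ← Complex.mul_conj, map_mul]
  ring

theorem exists_mul_sigma_eq_ofReal {D : C.B →₀ ℤ} {g : C.Mero} (hg : g ≠ 0)
    (hdiv : C.div g = C.conjDiv D - D) :
    ∃ r : ℝ, r ≠ 0 ∧ g * C.sigma g = algebraMap ℂ C.Mero r := by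
  have hσg : C.sigma g ≠ 0 := (map_ne_zero C.sigma).mpr hg
  have hprod : g * C.sigma g ≠ 0 := mul_ne_zero hg hσg
  have hdivprod : C.div (g * C.sigma g) = 0 := by
    rw [C.div_mul _ _ hg hσg, C.div_sigma, hdiv]
    change C.conjDiv D - D + C.conjDiv (C.conjDiv D - D) = 0
    rw [conjDiv_sub, conjDiv_conjDiv]
    abel
  obtain ⟨z, hz⟩ := (C.div_eq_zero_iff _ hprod).mp hdivprod
  have hconj : starRingEnd ℂ z = z := by
    apply (algebraMap ℂ C.Mero).injective
    rw [← C.sigma_algebraMap, ← hz, map_mul, C.sigma_invol, mul_comm]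
  refine ⟨z.re, fun hre => hprod ?_, ?_⟩
  · rw [hz, ← Complex.conj_eq_iff_re.mp hconj, hre, Complex.ofReal_zero, map_zero]
  · rw [hz, Complex.conj_eq_iff_re.mp hconj]

theorem exists_mul_sigma_eq_one_or_neg_one {g₀ : C.Mero} (hg₀ : g₀ ≠ 0) {r : ℝ} (hr : r ≠ 0)
    (hprod : g₀ * C.sigma g₀ = algebraMap ℂ C.Mero r) :
    ∃ g : C.Mero, g ≠ 0 ∧ C.div g = C.div g₀ ∧ (g * C.sigma g = 1 ∨ g * C.sigma g = -1) := by
  set u : ℂ := ((Real.sqrt |r| : ℝ) : ℂ)⁻¹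
  have hu : u ≠ 0 := inv_ne_zero (Complex.ofReal_ne_zero.mpr (by positivity))
  have halg : algebraMap ℂ C.Mero u ≠ 0 := (map_ne_zero _).mpr hu
  have hnormSq : Complex.normSq u * r = r / |r| := by
    rw [Complex.normSq_inv, Complex.normSq_ofReal, Real.mul_self_sqrt (abs_nonneg r)]
    ring
  refine ⟨algebraMap ℂ C.Mero u * g₀, mul_ne_zero halg hg₀, ?_, ?_⟩
  · rw [C.div_mul _ _ halg hg₀, C.div_algebraMap u hu, zero_add]
  · rw [algebraMap_mul_mul_sigma, hprod, ← map_mul, ← Complex.ofReal_mul, hnormSq]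
    rcases hr.lt_or_gt with hneg | hpos
    · right
      rw [abs_of_neg hneg, div_neg, div_self hr]
      simp
    · left
      rw [abs_of_pos hpos, div_self hr]
      simp

theorem mul_sigma_ne_neg_one {f g : C.Mero} (hf : f ≠ 0) (hg : g ≠ 0)
    (hdiv : C.div f = C.div g) (hprod : g * C.sigma g = 1) : f * C.sigma f ≠ -1 := by
  obtain ⟨z, rfl⟩ := exists_eq_algebraMap_mul_of_div_eq hf hg hdiv
  rw [algebraMap_mul_mul_sigma, hprod, mul_one, ← map_one (algebraMap ℂ C.Mero), ← map_neg,
    (algebraMap ℂ C.Mero).injective.ne_iff]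
  exact_mod_cast (by linarith [Complex.normSq_nonneg z] : Complex.normSq z ≠ -1)

end RealCurve

namespace LineBundle

variable {C : RealCurve} (L : LineBundle C)

theorem exists_coord {s₀ : L.S} (hs₀ : s₀ ≠ 0) :
    ∃ co : L.S →ₗ[C.Mero] C.Mero, co s₀ = 1 ∧ ∀ t, co t • s₀ = t := by
  have hspan : ⊤ ≤ Submodule.span C.Mero (Set.range fun _ : Unit => s₀) := by
    intro t _
    obtain ⟨f, rfl⟩ := L.rank_one s₀ t hs₀
    rw [Set.range_const]
    exact Submodule.smul_mem _ f (Submodule.mem_span_singleton_self s₀)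
  let b := Module.Basis.mk (linearIndependent_unique_iff.mpr hs₀) hspan
  refine ⟨b.coord (), Module.Basis.mk_coord_apply_eq (), fun t => ?_⟩
  simpa [b] using b.sum_repr t

namespace RealStructure

variable {L} (c : L.RealStructure)

theorem map_zero : c.toFun 0 = 0 := by
  simpa using c.map_add 0 0

theorem map_ne_zero {s : L.S} (hs : s ≠ 0) : c.toFun s ≠ 0 := by
  intro h
  have := c.invol s
  rw [h, c.map_zero] at this
  exact hs this.symm

theorem exists_eq_smul {s : L.S} (hs : s ≠ 0) :
    ∃ g : C.Mero, g ≠ 0 ∧ c.toFun s = g • s ∧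
      C.div g = C.conjDiv (L.divS s) - L.divS s ∧ g * C.sigma g = 1 := by
  obtain ⟨g, hg⟩ := L.rank_one s (c.toFun s) hs
  have hg0 : g ≠ 0 := by
    rintro rfl
    exact c.map_ne_zero hs (by rw [hg, zero_smul])
  refine ⟨g, hg0, hg, ?_, ?_⟩
  · have h := c.div_comp s hs
    rw [hg, L.divS_smul g s hg0 hs] at h
    exact eq_sub_of_add_eq h
  · have h := c.invol s
    rw [hg, c.map_smul, hg, smul_smul, ← one_smul C.Mero s, smul_smul, mul_one] at h
    rw [mul_comm]
    exact smul_left_injective C.Mero hs h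

end RealStructure

def RealStructure.ofSection {s₀ : L.S} (co : L.S →ₗ[C.Mero] C.Mero) (hco_self : co s₀ = 1)
    (hco : ∀ t, co t • s₀ = t) (hs₀ : s₀ ≠ 0) {g : C.Mero} (hg : g ≠ 0)
    (hdiv : C.div g = C.conjDiv (L.divS s₀) - L.divS s₀) (hprod : g * C.sigma g = 1) :
    L.RealStructure :=
  { toFun := fun t => (C.sigma (co t) * g) • s₀
    map_add := fun s t => by simp only [_root_.map_add, add_mul, add_smul]
    map_smul := fun f t => by simp only [co.map_smul, smul_eq_mul, map_mul, mul_assoc, smul_smul]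
    invol := fun t => by
      rw [co.map_smul, hco_self, smul_eq_mul, mul_one, map_mul, C.sigma_invol, mul_assoc,
        mul_comm (C.sigma g), hprod, mul_one, hco]
    div_comp := fun t ht => by
      have hcot : co t ≠ 0 := fun h0 => ht (by rw [← hco t, h0, zero_smul])
      have hσ : C.sigma (co t) ≠ 0 := (_root_.map_ne_zero C.sigma).mpr hcot
      conv_rhs => rw [← hco t]
      rw [L.divS_smul _ _ (mul_ne_zero hσ hg) hs₀, C.div_mul _ _ hσ hg, C.div_sigma, hdiv,
        L.divS_smul _ _ hcot hs₀]
      change C.conjDiv (C.div (co t)) + (C.conjDiv (L.divS s₀) - L.divS s₀) + L.divS s₀ =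
        C.conjDiv (C.div (co t) + L.divS s₀)
      rw [RealCurve.conjDiv_add]
      abel }

end LineBundle

/-- **Lemma (lemmaRL).**  Let `(B, c_B)` be a smooth compact complex irreducible real
algebraic curve and `L ∈ Pic(B)`.  There exists a real structure on `L` lifting
`c_B` if and only if `c_B^*(L) = L` (i.e. `c_B(D)` is linearly equivalent to `D`
for every divisor `D` associated to `L`) and, for every couple `(D, f_D)` consisting
of a divisor `D` associated to `L` and a meromorphic function `f_D` with
`div (f_D) = c_B(D) - D` and `f_D ⬝ conj (f_D ∘ c_B) = ±1`, one has
`f_D ⬝ conj (f_D ∘ c_B) = +1`.  (Here `f ⬝ conj (f ∘ c_B) = f * σ f`.) -/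
theorem stmt_3 (C : RealCurve) (L : LineBundle C) :
    Nonempty L.RealStructure ↔
      ((∀ D : C.B →₀ ℤ, L.Assoc D → C.LinEquiv (C.conjDiv D) D) ∧
       (∀ (D : C.B →₀ ℤ) (f : C.Mero), L.Assoc D → f ≠ 0 →
          C.div f = C.conjDiv D - D →
          (f * C.sigma f = 1 ∨ f * C.sigma f = -1) → f * C.sigma f = 1)) := by
  constructor
  · rintro ⟨c⟩
    refine ⟨?_, ?_⟩
    · rintro D ⟨s, hs, rfl⟩
      obtain ⟨g, hg, -, hdiv, -⟩ := c.exists_eq_smul hs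
      exact ⟨g, hg, hdiv⟩
    · rintro D f ⟨s, hs, rfl⟩ hf hdivf hpm
      obtain ⟨g, hg, -, hdiv, hprod⟩ := c.exists_eq_smul hs
      exact hpm.resolve_right (RealCurve.mul_sigma_ne_neg_one hf hg (hdivf.trans hdiv.symm) hprod)
  · rintro ⟨hlin, hsign⟩
    obtain ⟨s₀, hs₀⟩ := L.exists_section
    have hassoc : L.Assoc (L.divS s₀) := ⟨s₀, hs₀, rfl⟩
    obtain ⟨g₀, hg₀, hdiv₀⟩ := hlin _ hassoc
    obtain ⟨r, hr, hprod₀⟩ := RealCurve.exists_mul_sigma_eq_ofReal hg₀ hdiv₀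
    obtain ⟨g, hg, hdiv, hpm⟩ := RealCurve.exists_mul_sigma_eq_one_or_neg_one hg₀ hr hprod₀
    rw [hdiv₀] at hdiv
    obtain ⟨co, hco_self, hco⟩ := L.exists_coord hs₀
    exact ⟨.ofSection L co hco_self hco hs₀ hg hdiv (hsign _ g hassoc hg hdiv hpm)⟩
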